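/- Let N ≥ 3, μ = 1 (cubic NLS), α < 0, let j be an integer with 0 ≤ j ≤ ⌊(N-1)/2⌋ and ω > α²/(N-2j)². Then M[Φ_ω^j] = 2N√ω - 2|α|, independently of j. Consequently, for m > 0 the mass constraint M[Φ_ω^j] = m is satisfied exactly when ω = ω* := (m + 2|α|)²/(4N²), the same frequency for every j. -/

import Mathlib

/-! Since `φ_{ω,b}² = 2ω / cosh²(√ω (x - b))` has antiderivative `2√ω tanh(√ω (x - b))`, an edge
carrying `φ_{ω,±a}` has mass `2√ω (1 ± tanh(√ω a))`, and `a = a^j` is chosen so that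
`tanh(√ω a^j) = |α| / ((N - 2j)√ω)`. The `j` edges with `+` and the `N - j` edges with `-` sum to
`2N√ω - (N - 2j) 2√ω tanh(√ω a^j) = 2N√ω - 2|α|`, which is then solved for `√ω`. -/

open Real MeasureTheory

/-- `sech y = 1 / cosh y`. -/
noncomputable def sech (y : ℝ) : ℝ := 1 / Real.cosh y

/-- Inverse hyperbolic tangent. -/
noncomputable def artanh (x : ℝ) : ℝ := (1 / 2) * Real.log ((1 + x) / (1 - x))

/-- The half-line soliton profile `φ_{ω,a}(x) = [(μ+1)ω]^{1/(2μ)} sech^{1/μ}(μ√ω (x-a))`;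
for `μ = 1` this is `√(2ω) sech(√ω (x-a))`. -/
noncomputable def solProfile (μ ω a : ℝ) (x : ℝ) : ℝ :=
  ((μ + 1) * ω) ^ (1 / (2 * μ)) * sech (μ * Real.sqrt ω * (x - a)) ^ (1 / μ)

/-- `a^j = (1/(μ√ω)) arctanh(|α|/((N-2j)√ω))`. -/
noncomputable def aCenter (μ α : ℝ) (N j : ℕ) (ω : ℝ) : ℝ :=
  (1 / (μ * Real.sqrt ω)) * _root_.artanh (|α| / (((N : ℝ) - 2 * j) * Real.sqrt ω))

/-- The stationary state `Φ_ω^j` with `j` bumps. -/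
noncomputable def statState (μ α : ℝ) (N j : ℕ) (ω : ℝ) : Fin N → ℝ → ℝ := fun i =>
  if (i : ℕ) < j then solProfile μ ω (aCenter μ α N j ω)
  else solProfile μ ω (-(aCenter μ α N j ω))

/-- The mass `M[Φ_ω^j] = Σ_i ∫_0^∞ |(Φ_ω^j)_i|² dx`. -/
noncomputable def massState (μ α : ℝ) (N j : ℕ) (ω : ℝ) : ℝ :=
  ∑ i : Fin N, ∫ x in Set.Ioi (0 : ℝ), |statState μ α N j ω i x| ^ 2

/-- The cubic (`μ = 1`) NLS energy of the stationary state `Φ_ω^j`: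
`E[Ψ] = (1/2) Σ_i ∫_0^∞ |ψ_i′|² - (1/4) Σ_i ∫_0^∞ |ψ_i|⁴ + (α/2)|ψ(0)|²`
(the common vertex value being `φ_{ω,-a^j}(0)`). -/
noncomputable def energyStateCubic (α : ℝ) (N j : ℕ) (ω : ℝ) : ℝ :=
  (1 / 2) * ∑ i : Fin N, ∫ x in Set.Ioi (0 : ℝ), |deriv (statState 1 α N j ω i) x| ^ 2
    - (1 / 4) * ∑ i : Fin N, ∫ x in Set.Ioi (0 : ℝ), |statState 1 α N j ω i x| ^ 4
    + (α / 2) * |solProfile 1 ω (-(aCenter 1 α N j ω)) 0| ^ 2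

open Filter Set Topology

theorem Real.hasDerivAt_tanh (x : ℝ) : HasDerivAt tanh (1 / cosh x ^ 2) x := by
  have h := (hasDerivAt_sinh x).div (hasDerivAt_cosh x) (cosh_pos x).ne'
  rw [← sq, ← sq, cosh_sq_sub_sinh_sq] at h
  exact h.congr_of_eventuallyEq (.of_forall fun y ↦ tanh_eq_sinh_div_cosh y)

theorem Real.tanh_eq_one_sub_exp_div (x : ℝ) :
    tanh x = (1 - exp (-(2 * x))) / (1 + exp (-(2 * x))) := by
  have hx : exp (-(2 * x)) = exp (-x) / exp x := by rw [← exp_sub]; ring_nf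
  rw [tanh_eq, hx]
  field_simp

theorem Real.tendsto_tanh_atTop : Tendsto tanh atTop (𝓝 1) := by
  have hexp : Tendsto (fun x : ℝ ↦ exp (-(2 * x))) atTop (𝓝 0) :=
    tendsto_exp_neg_atTop_nhds_zero.comp (tendsto_id.const_mul_atTop two_pos)
  have h : Tendsto (fun x ↦ (1 - exp (-(2 * x))) / (1 + exp (-(2 * x)))) atTop
      (𝓝 ((1 - 0) / (1 + 0))) :=
    (tendsto_const_nhds.sub hexp).div (tendsto_const_nhds.add hexp) (by norm_num)
  simpa only [← tanh_eq_one_sub_exp_div, sub_zero, add_zero, div_one] using h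

theorem integral_Ioi_inv_cosh_sq_mul_sub {c : ℝ} (hc : 0 < c) (a b : ℝ) :
    ∫ x in Ioi a, 1 / cosh (c * (x - b)) ^ 2 = (1 - tanh (c * (a - b))) / c := by
  set F : ℝ → ℝ := fun x ↦ tanh (c * (x - b)) / c
  have hF : ∀ x, HasDerivAt F (1 / cosh (c * (x - b)) ^ 2) x := fun x ↦ by
    have h := ((hasDerivAt_tanh _).comp x (((hasDerivAt_id x).sub_const b).const_mul c)).div_const c
    exact h.congr_deriv (by simp [hc.ne'])
  have hlim : Tendsto F atTop (𝓝 (1 / c)) :=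
    (tendsto_tanh_atTop.comp ((tendsto_atTop_add_const_right _ (-b) tendsto_id).const_mul_atTop
      hc)).div_const c
  rw [integral_Ioi_of_hasDerivAt_of_nonneg' (fun x _ ↦ hF x) (fun x _ ↦ by positivity) hlim]
  ring

theorem artanh_eq_real_artanh {t : ℝ} (ht : t ∈ Icc (-1) 1) :
    _root_.artanh t = Real.artanh t := by
  rw [Real.artanh_eq_half_log ht, _root_.artanh]

theorem sq_solProfile_one {ω : ℝ} (hω : 0 ≤ ω) (b x : ℝ) :
    solProfile 1 ω b x ^ 2 = 2 * ω / cosh (√ω * (x - b)) ^ 2 := by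
  have hsq : ((2 * ω) ^ (1 / 2 : ℝ)) ^ 2 = 2 * ω := by
    rw [← sqrt_eq_rpow, sq_sqrt (by positivity)]
  norm_num [solProfile, sech, mul_pow, hsq, div_eq_mul_inv]

theorem integral_sq_solProfile_one {ω : ℝ} (hω : 0 < ω) (b : ℝ) :
    ∫ x in Ioi 0, |solProfile 1 ω b x| ^ 2 = 2 * √ω * (1 + tanh (√ω * b)) := by
  have hs : 0 < √ω := sqrt_pos.2 hω
  simp_rw [sq_abs, sq_solProfile_one hω.le, div_eq_mul_one_div (2 * ω)]
  rw [integral_const_mul, integral_Ioi_inv_cosh_sq_mul_sub hs, zero_sub, mul_neg, tanh_neg,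
    sub_neg_eq_add]
  field_simp
  rw [sq_sqrt hω.le]

theorem tanh_sqrt_mul_aCenter_one {α : ℝ} {N j : ℕ} {ω : ℝ} (hD : 0 < (N : ℝ) - 2 * j)
    (hω : α ^ 2 / ((N : ℝ) - 2 * j) ^ 2 < ω) :
    tanh (√ω * aCenter 1 α N j ω) = |α| / (((N : ℝ) - 2 * j) * √ω) := by
  set D := (N : ℝ) - 2 * j
  have hω₀ : 0 < ω := lt_of_le_of_lt (by positivity) hω
  have hs : 0 < √ω := sqrt_pos.2 hω₀
  have ht : |α| / (D * √ω) < 1 := by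
    rw [div_lt_one (by positivity), ← abs_of_pos (mul_pos hD hs), ← sq_lt_sq,
      mul_pow, sq_sqrt hω₀.le]
    rwa [div_lt_iff₀ (by positivity), mul_comm] at hω
  have ht₀ : 0 ≤ |α| / (D * √ω) := by positivity
  rw [aCenter, one_mul, ← mul_assoc, mul_one_div_cancel hs.ne', one_mul,
    artanh_eq_real_artanh ⟨by linarith, ht.le⟩, Real.tanh_artanh ⟨by linarith, ht⟩]

theorem Fin.sum_ite_val_lt {M : Type*} [AddCommMonoid M] {N j : ℕ} (h : j ≤ N) (A B : M) :
    ∑ i : Fin N, (if (i : ℕ) < j then A else B) = j • A + (N - j) • B := by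
  rw [Fin.sum_univ_eq_sum_range (fun i ↦ if i < j then A else B),
    ← Finset.sum_range_add_sum_Ico _ h,
    Finset.sum_congr rfl fun i hi ↦ if_pos (Finset.mem_range.1 hi),
    Finset.sum_congr rfl fun i hi ↦ if_neg (Finset.mem_Ico.1 hi).1.not_gt]
  simp

theorem massState_one_eq {α : ℝ} {N j : ℕ} {ω : ℝ} (hjN : 2 * j < N)
    (hω : α ^ 2 / ((N : ℝ) - 2 * j) ^ 2 < ω) :
    massState 1 α N j ω = 2 * N * √ω - 2 * |α| := by
  have hD : 0 < (N : ℝ) - 2 * j := by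
    rw [sub_pos]; exact_mod_cast hjN
  have hω₀ : 0 < ω := lt_of_le_of_lt (by positivity) hω
  set t := tanh (√ω * aCenter 1 α N j ω) with ht
  have hmass : massState 1 α N j ω = ∑ i : Fin N,
      (if (i : ℕ) < j then 2 * √ω * (1 + t) else 2 * √ω * (1 - t)) := by
    refine Finset.sum_congr rfl fun i _ ↦ ?_
    unfold statState
    split_ifs
    · rw [integral_sq_solProfile_one hω₀]
    · rw [integral_sq_solProfile_one hω₀, mul_neg, tanh_neg, ← sub_eq_add_neg]
  rw [hmass, Fin.sum_ite_val_lt (by omega), nsmul_eq_mul, nsmul_eq_mul, Nat.cast_sub (by omega),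
    ht, tanh_sqrt_mul_aCenter_one hD hω]
  have hcancel : ((N : ℝ) - 2 * j) * √ω * (|α| / (((N : ℝ) - 2 * j) * √ω)) = |α| :=
    mul_div_cancel₀ _ (mul_pos hD (sqrt_pos.2 hω₀)).ne'
  linear_combination (-2) * hcancel

theorem two_mul_mul_sqrt_sub_eq_iff {n a m ω : ℝ} (hn : 0 < n) (hω : 0 ≤ ω)
    (hma : 0 ≤ m + 2 * a) :
    2 * n * √ω - 2 * a = m ↔ ω = (m + 2 * a) ^ 2 / (4 * n ^ 2) := by
  calc 2 * n * √ω - 2 * a = m ↔ √ω = (m + 2 * a) / (2 * n) := by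
        rw [eq_div_iff (by positivity)]
        constructor <;> intro h <;> linarith
    _ ↔ ω = ((m + 2 * a) / (2 * n)) ^ 2 := sqrt_eq_iff_eq_sq hω (by positivity)
    _ ↔ ω = (m + 2 * a) ^ 2 / (4 * n ^ 2) := by ring_nf

theorem cubic_mass_constraint_general (N : ℕ) (hN : 3 ≤ N) (α : ℝ)
    (j : ℕ) (hj : j ≤ (N - 1) / 2) :
    (∀ ω : ℝ, α ^ 2 / ((N : ℝ) - 2 * j) ^ 2 < ω →
      massState 1 α N j ω = 2 * N * Real.sqrt ω - 2 * |α|) ∧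
    (∀ m : ℝ, 0 < m → ∀ ω : ℝ, α ^ 2 / ((N : ℝ) - 2 * j) ^ 2 < ω →
      (massState 1 α N j ω = m ↔ ω = (m + 2 * |α|) ^ 2 / (4 * (N : ℝ) ^ 2))) := by
  have hjN : 2 * j < N := by omega
  refine ⟨fun ω hω ↦ massState_one_eq hjN hω, fun m hm ω hω ↦ ?_⟩
  rw [massState_one_eq hjN hω]
  exact two_mul_mul_sqrt_sub_eq_iff (by positivity) (lt_of_le_of_lt (by positivity) hω).le
    (by positivity)

/-- in the cubic case `μ = 1`, for `N ≥ 3`, `α < 0`, `0 ≤ j ≤ ⌊(N-1)/2⌋` and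
`ω > α²/(N-2j)²`, the mass is `M[Φ_ω^j] = 2N√ω - 2|α|`, independently of `j`; consequently,
for `m > 0`, the constraint `M[Φ_ω^j] = m` holds exactly when `ω = (m+2|α|)²/(4N²)`. -/
theorem cubic_mass_constraint (N : ℕ) (hN : 3 ≤ N) (α : ℝ) (hα : α < 0)
    (j : ℕ) (hj : j ≤ (N - 1) / 2) :
    (∀ ω : ℝ, α ^ 2 / ((N : ℝ) - 2 * j) ^ 2 < ω →
      massState 1 α N j ω = 2 * N * Real.sqrt ω - 2 * |α|) ∧
    (∀ m : ℝ, 0 < m → ∀ ω : ℝ, α ^ 2 / ((N : ℝ) - 2 * j) ^ 2 < ω →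
      (massState 1 α N j ω = m ↔ ω = (m + 2 * |α|) ^ 2 / (4 * (N : ℝ) ^ 2))) :=
  cubic_mass_constraint_general N hN α j hj
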